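/- arXiv:2502.02133 — 5 statements merged into one kernel-verified Lean document; each statement's English description precedes it below -/
import Mathlib

section
/- Value iteration converges: the Bellman optimality operator T has a unique fixed point Q⋆ : S × A → ℝ, and for every initial action-value function Q₀ : S × A → ℝ the sequence of iterates (T^n Q₀)_{n∈ℕ} converges (in the supremum norm) to Q⋆. -/
/-! In the sup norm, `Q ↦ min_{a'} Q(·, a')` is 1-Lipschitz and averaging against the
probability vector `P s a` does not increase distances, so `T` is a `γ`-contraction on the
complete space `S × A → ℝ`; Banach's fixed point theorem gives the rest. -/

open Finset

/-- The Bellman optimality operator `T` on action-value functions for a finite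
discounted MDP: `(T Q)(s,a) = l(s,a) + γ ∑_{s'} P(s'|s,a) · min_{a'} Q(s',a')`. -/
noncomputable def Topt {S A : Type*} [Fintype S] [Fintype A] [Nonempty A]
    (P : S → A → PMF S) (l : S → A → ℝ) (γ : ℝ) (Q : S × A → ℝ) : S × A → ℝ :=
  fun sa => l sa.1 sa.2 +
    γ * ∑ s' : S, (P sa.1 sa.2 s').toReal *
      (univ.inf' univ_nonempty fun a' => Q (s', a'))

theorem PMF.sum_toReal_eq_one {α : Type*} [Fintype α] (p : PMF α) :
    ∑ a, (p a).toReal = 1 := by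
  rw [← ENNReal.toReal_sum fun a _ => p.apply_ne_top a,
    ← tsum_fintype (L := .unconditional _), p.tsum_coe, ENNReal.toReal_one]

theorem Finset.abs_inf'_sub_inf'_le {ι α : Type*} [AddCommGroup α] [LinearOrder α]
    [IsOrderedAddMonoid α] {s : Finset ι} (hs : s.Nonempty) {f g : ι → α} {c : α}
    (h : ∀ i ∈ s, |f i - g i| ≤ c) : |s.inf' hs f - s.inf' hs g| ≤ c := by
  refine abs_sub_le_iff.mpr ⟨sub_le_comm.mp (le_inf' hs _ fun i hi => ?_),
    sub_le_comm.mp (le_inf' hs _ fun i hi => ?_)⟩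
  · exact (sub_le_sub_right (inf'_le f hi) c).trans
      (sub_le_comm.mp (abs_sub_le_iff.mp (h i hi)).1)
  · exact (sub_le_sub_right (inf'_le g hi) c).trans
      (sub_le_comm.mp (abs_sub_le_iff.mp (h i hi)).2)

theorem Finset.abs_sum_mul_le_of_sum_eq_one {ι R : Type*} [CommRing R] [LinearOrder R]
    [IsOrderedRing R] (s : Finset ι) {w x : ι → R} (hw : ∀ i ∈ s, 0 ≤ w i)
    (hw₁ : ∑ i ∈ s, w i = 1) {c : R} (hx : ∀ i ∈ s, |x i| ≤ c) :
    |∑ i ∈ s, w i * x i| ≤ c :=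
  calc |∑ i ∈ s, w i * x i| ≤ ∑ i ∈ s, w i * c := by
        refine (abs_sum_le_sum_abs _ _).trans (sum_le_sum fun i hi => ?_)
        rw [abs_mul, abs_of_nonneg (hw i hi)]
        exact mul_le_mul_of_nonneg_left (hx i hi) (hw i hi)
    _ = c := by rw [← sum_mul, hw₁, one_mul]

section Bellman

variable {S A : Type*} [Fintype S] [Fintype A] [Nonempty A]
  (P : S → A → PMF S) (l : S → A → ℝ) {γ : ℝ}

theorem dist_Topt_le (hγ : 0 ≤ γ) (Q₁ Q₂ : S × A → ℝ) :
    dist (Topt P l γ Q₁) (Topt P l γ Q₂) ≤ γ * dist Q₁ Q₂ := by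
  refine (dist_pi_le_iff (mul_nonneg hγ dist_nonneg)).mpr fun ⟨s, a⟩ => ?_
  have hmin : ∀ s' : S, |(univ.inf' univ_nonempty fun a' => Q₁ (s', a')) -
      univ.inf' univ_nonempty fun a' => Q₂ (s', a')| ≤ dist Q₁ Q₂ := fun s' =>
    abs_inf'_sub_inf'_le _ fun a' _ => (Real.dist_eq _ _).symm.trans_le
      (dist_le_pi_dist Q₁ Q₂ (s', a'))
  rw [Real.dist_eq]
  simp only [Topt, add_sub_add_left_eq_sub, ← mul_sub, ← sum_sub_distrib, abs_mul,
    abs_of_nonneg hγ]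
  exact mul_le_mul_of_nonneg_left (abs_sum_mul_le_of_sum_eq_one _
    (fun _ _ => ENNReal.toReal_nonneg) (P s a).sum_toReal_eq_one fun s' _ => hmin s') hγ

theorem contractingWith_Topt (hγ₀ : 0 ≤ γ) (hγ₁ : γ < 1) :
    ContractingWith ⟨γ, hγ₀⟩ (Topt P l γ) :=
  ⟨hγ₁, LipschitzWith.of_dist_le_mul (dist_Topt_le P l hγ₀)⟩

end Bellman

theorem value_iteration_converges_general
    {S A : Type*} [Fintype S] [Fintype A] [Nonempty A]
    (P : S → A → PMF S) (l : S → A → ℝ) (γ : ℝ) (hγ0 : 0 ≤ γ) (hγ1 : γ < 1) :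
    ∃ Qstar : S × A → ℝ,
      Topt P l γ Qstar = Qstar ∧
      (∀ Q' : S × A → ℝ, Topt P l γ Q' = Q' → Q' = Qstar) ∧
      ∀ Q₀ : S × A → ℝ,
        Filter.Tendsto (fun n : ℕ => (Topt P l γ)^[n] Q₀) Filter.atTop (nhds Qstar) := by
  have hT := contractingWith_Topt P l hγ0 hγ1
  exact ⟨ContractingWith.fixedPoint _ hT, hT.fixedPoint_isFixedPt,
    fun _ hQ => hT.fixedPoint_unique hQ, hT.tendsto_iterate_fixedPoint⟩

/-- Value iteration converges: `T` has a unique fixed point `Q⋆`, and for every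
initial `Q₀` the iterates `T^n Q₀` converge (in the supremum norm) to `Q⋆`. -/
theorem value_iteration_converges
    {S A : Type*} [Fintype S] [Fintype A] [Nonempty S] [Nonempty A]
    (P : S → A → PMF S) (l : S → A → ℝ) (γ : ℝ) (hγ0 : 0 ≤ γ) (hγ1 : γ < 1) :
    ∃ Qstar : S × A → ℝ,
      Topt P l γ Qstar = Qstar ∧
      (∀ Q' : S × A → ℝ, Topt P l γ Q' = Q' → Q' = Qstar) ∧
      ∀ Q₀ : S × A → ℝ,
        Filter.Tendsto (fun n : ℕ => (Topt P l γ)^[n] Q₀) Filter.atTop (nhds Qstar) :=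
  value_iteration_converges_general P l γ hγ0 hγ1
end

section
/- The optimal action-value function is a pointwise lower bound over all policies: for every stochastic policy π and every state-action pair (s,a), Q⋆(s,a) ≤ Q^π(s,a), where Q⋆ is the unique fixed point of the Bellman optimality operator T and Q^π is the unique fixed point of the policy Bellman operator T^π. -/
open Finset

/-- The policy Bellman operator `T^π` on action-value functions for a finite
discounted MDP: `(T^π Q)(s,a) = l(s,a) + γ ∑_{s'} P(s'|s,a) ∑_{a'} π(a'|s') Q(s',a')`. -/
noncomputable def Tpol {S A : Type*} [Fintype S] [Fintype A]
    (P : S → A → PMF S) (l : S → A → ℝ) (γ : ℝ) (π : S → PMF A)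
    (Q : S × A → ℝ) : S × A → ℝ :=
  fun sa => l sa.1 sa.2 +
    γ * ∑ s' : S, (P sa.1 sa.2 s').toReal * ∑ a' : A, (π s' a').toReal * Q (s', a')

lemma pmf_sum_toReal_eq_one {α : Type*} [Fintype α] (p : PMF α) :
    ∑ x : α, (p x).toReal = 1 := by
  have h : ∑' x : α, p x = 1 := p.tsum_coe
  rw [tsum_fintype] at h
  have : (∑ x : α, p x).toReal = 1 := by rw [h]; simp
  rwa [ENNReal.toReal_sum (fun x _ => PMF.apply_ne_top p x)] at this

/-- The optimal action-value function `Q⋆` (the unique fixed point of `T`) is a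
pointwise lower bound on the action-value function `Q^π` (the unique fixed point
of `T^π`) of every stochastic policy `π`. -/
theorem optimal_action_value_le_policy_action_value
    {S A : Type*} [Fintype S] [Fintype A] [Nonempty S] [Nonempty A]
    (P : S → A → PMF S) (l : S → A → ℝ) (γ : ℝ) (hγ0 : 0 ≤ γ) (hγ1 : γ < 1)
    (Qstar : S × A → ℝ) (hQstar : Topt P l γ Qstar = Qstar)
    (π : S → PMF A) (Qpi : S × A → ℝ) (hQpi : Tpol P l γ π Qpi = Qpi)
    (s : S) (a : A) :
    Qstar (s, a) ≤ Qpi (s, a) := by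
  set D : S × A → ℝ := fun sa => Qstar sa - Qpi sa with hD
  have hne : (univ : Finset (S × A)).Nonempty := univ_nonempty
  set M : ℝ := univ.sup' hne D with hMdef
  have hM : ∀ sa : S × A, D sa ≤ M := fun sa => le_sup' D (mem_univ sa)
  have key : ∀ sa : S × A, D sa ≤ γ * M := by
    intro sa
    have h1 : Qstar sa = l sa.1 sa.2 +
        γ * ∑ s' : S, (P sa.1 sa.2 s').toReal *
          (univ.inf' univ_nonempty fun a' => Qstar (s', a')) := by
      conv_lhs => rw [← hQstar]
      rfl
    have h2 : Qpi sa = l sa.1 sa.2 +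
        γ * ∑ s' : S, (P sa.1 sa.2 s').toReal *
          ∑ a' : A, (π s' a').toReal * Qpi (s', a') := by
      conv_lhs => rw [← hQpi]
      rfl
    have hterm : ∀ s' : S,
        (P sa.1 sa.2 s').toReal * (univ.inf' univ_nonempty fun a' => Qstar (s', a'))
        ≤ (P sa.1 sa.2 s').toReal * (∑ a' : A, (π s' a').toReal * Qpi (s', a') + M) := by
      intro s'
      apply mul_le_mul_of_nonneg_left _ ENNReal.toReal_nonneg
      have hmin : (univ.inf' univ_nonempty fun a' => Qstar (s', a'))
          ≤ ∑ a' : A, (π s' a').toReal * Qstar (s', a') := by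
        calc (univ.inf' univ_nonempty fun a' => Qstar (s', a'))
            = ∑ a' : A, (π s' a').toReal *
                (univ.inf' univ_nonempty fun a' => Qstar (s', a')) := by
              rw [← Finset.sum_mul, pmf_sum_toReal_eq_one, one_mul]
          _ ≤ ∑ a' : A, (π s' a').toReal * Qstar (s', a') := by
              apply Finset.sum_le_sum
              intro a' _
              exact mul_le_mul_of_nonneg_left
                (inf'_le _ (mem_univ a')) ENNReal.toReal_nonneg
      refine hmin.trans ?_
      have : ∑ a' : A, (π s' a').toReal * Qstar (s', a')
          ≤ ∑ a' : A, (π s' a').toReal * (Qpi (s', a') + M) := by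
        apply Finset.sum_le_sum
        intro a' _
        apply mul_le_mul_of_nonneg_left _ ENNReal.toReal_nonneg
        have := hM (s', a')
        simp only [hD] at this
        linarith
      refine this.trans_eq ?_
      simp only [mul_add, Finset.sum_add_distrib, ← Finset.sum_mul,
        pmf_sum_toReal_eq_one, one_mul]
    have hsum : ∑ s' : S, (P sa.1 sa.2 s').toReal *
        (univ.inf' univ_nonempty fun a' => Qstar (s', a'))
        ≤ (∑ s' : S, (P sa.1 sa.2 s').toReal *
          ∑ a' : A, (π s' a').toReal * Qpi (s', a')) + M := by
      calc _ ≤ ∑ s' : S, (P sa.1 sa.2 s').toReal *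
              (∑ a' : A, (π s' a').toReal * Qpi (s', a') + M) :=
            Finset.sum_le_sum fun s' _ => hterm s'
        _ = _ := by
            simp only [mul_add, Finset.sum_add_distrib, ← Finset.sum_mul,
              pmf_sum_toReal_eq_one, one_mul]
    simp only [hD, h1, h2]
    nlinarith [hsum]
  have hMle : M ≤ γ * M := by
    obtain ⟨sa, _, hsa⟩ := exists_mem_eq_sup' hne D
    have hM' : M = D sa := hsa
    conv_lhs => rw [hM']
    exact key sa
  have hM0 : M ≤ 0 := by nlinarith
  have := (hM (s, a)).trans hM0
  simp only [hD] at this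
  linarith
end

section
/- The optimal value function equals the pointwise infimum over policies of the policy value functions, and the infimum is attained: for every s ∈ S, min_{a} Q⋆(s,a) = ⨅_{π : S → PMF A} V^π(s), and there exists a policy π attaining this infimum simultaneously for all s ∈ S. -/
open Finset

/-- The state-value function `V^π(s) = ∑_a π(a|s) Q(s,a)` induced by a policy `π`
and an action-value function `Q`. -/
noncomputable def Vof {S A : Type*} [Fintype A] (π : S → PMF A) (Q : S × A → ℝ)
    (s : S) : ℝ :=
  ∑ a : A, (π s a).toReal * Q (s, a)

/-! `T^π` averages with nonnegative weights summing to one and then discounts by `γ < 1`, so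
at a maximiser of `Q - Q^π` a subsolution `Q ≤ T^π Q` satisfies `max (Q - Q^π) ≤ γ max (Q - Q^π)`:
subsolutions lie below `Q^π`. As `min_a Q(s,a) ≤ ∑_a π(a|s) Q(s,a)`, we get `Q⋆ = T Q⋆ ≤ T^π Q⋆`,
hence `Q⋆ ≤ Q^π` and `min_a Q⋆(s,a) ≤ V^π(s)` for every policy. The deterministic policy choosing a
minimiser of `Q⋆(s,·)` turns `T^π` into `T` on `Q⋆`, so its value function is `Q⋆` and it attains
the bound at every state. -/

namespace PMF

variable {α : Type*} [Fintype α] (p : PMF α)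

lemma sum_toReal_eq_one_s10 : ∑ a, (p a).toReal = 1 := by
  rw [← ENNReal.toReal_sum fun a _ => p.apply_ne_top a, ← tsum_fintype (L := .unconditional _),
    p.tsum_coe, ENNReal.toReal_one]

lemma sum_toReal_mul_mono {f g : α → ℝ} (hfg : f ≤ g) :
    ∑ a, (p a).toReal * f a ≤ ∑ a, (p a).toReal * g a :=
  sum_le_sum fun a _ => mul_le_mul_of_nonneg_left (hfg a) ENNReal.toReal_nonneg

lemma sum_toReal_mul_const (c : ℝ) : ∑ a, (p a).toReal * c = c := by
  rw [← sum_mul, p.sum_toReal_eq_one_s10, one_mul]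

lemma sum_toReal_mul_le {f : α → ℝ} {c : ℝ} (hf : ∀ a, f a ≤ c) :
    ∑ a, (p a).toReal * f a ≤ c :=
  (p.sum_toReal_mul_mono (f := f) (g := fun _ => c) hf).trans_eq (p.sum_toReal_mul_const c)

lemma le_sum_toReal_mul {f : α → ℝ} {c : ℝ} (hf : ∀ a, c ≤ f a) :
    c ≤ ∑ a, (p a).toReal * f a :=
  (p.sum_toReal_mul_const c).symm.trans_le (p.sum_toReal_mul_mono (f := fun _ => c) hf)

lemma sum_pure_toReal_mul (b : α) (f : α → ℝ) :
    ∑ a, ((pure b : PMF α) a).toReal * f a = f b := by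
  classical
  simp [PMF.pure_apply, apply_ite ENNReal.toReal, ite_mul]

end PMF

section Policy

variable {S A : Type*} [Fintype A]

lemma Vof_mono (π : S → PMF A) {Q Q' : S × A → ℝ} (h : Q ≤ Q') (s : S) :
    Vof π Q s ≤ Vof π Q' s :=
  (π s).sum_toReal_mul_mono fun a => h (s, a)

lemma Vof_sub (π : S → PMF A) (Q Q' : S × A → ℝ) (s : S) :
    Vof π (Q - Q') s = Vof π Q s - Vof π Q' s := by
  simp only [Vof, Pi.sub_apply, mul_sub, sum_sub_distrib]

variable [Nonempty A]

lemma inf'_le_Vof (π : S → PMF A) (Q : S × A → ℝ) (s : S) :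
    univ.inf' univ_nonempty (fun a => Q (s, a)) ≤ Vof π Q s :=
  (π s).le_sum_toReal_mul fun a => inf'_le _ (mem_univ a)

noncomputable def greedyAction (Q : S × A → ℝ) (s : S) : A :=
  (exists_mem_eq_inf' univ_nonempty fun a => Q (s, a)).choose

lemma inf'_eq_greedyAction (Q : S × A → ℝ) (s : S) :
    univ.inf' univ_nonempty (fun a => Q (s, a)) = Q (s, greedyAction Q s) :=
  (exists_mem_eq_inf' univ_nonempty fun a => Q (s, a)).choose_spec.2

noncomputable def greedyPolicy (Q : S × A → ℝ) (s : S) : PMF A :=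
  PMF.pure (greedyAction Q s)

lemma Vof_greedyPolicy (Q : S × A → ℝ) (s : S) :
    Vof (greedyPolicy Q) Q s = univ.inf' univ_nonempty (fun a => Q (s, a)) := by
  rw [Vof, greedyPolicy, PMF.sum_pure_toReal_mul, inf'_eq_greedyAction]

end Policy

section Bellman

variable {S A : Type*} [Fintype S] [Fintype A] (P : S → A → PMF S) (l : S → A → ℝ) {γ : ℝ}

lemma Tpol_eq_add_sum_Vof (π : S → PMF A) (Q : S × A → ℝ) (sa : S × A) :
    Tpol P l γ π Q sa = l sa.1 sa.2 + γ * ∑ s', (P sa.1 sa.2 s').toReal * Vof π Q s' :=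
  rfl

lemma Tpol_sub_Tpol (π : S → PMF A) (Q Q' : S × A → ℝ) (sa : S × A) :
    Tpol P l γ π Q sa - Tpol P l γ π Q' sa =
      γ * ∑ s', (P sa.1 sa.2 s').toReal * Vof π (Q - Q') s' := by
  simp only [Tpol_eq_add_sum_Vof, Vof_sub, mul_sub, sum_sub_distrib]
  ring

lemma le_zero_of_le_mul_sum_Vof (hγ0 : 0 ≤ γ) (hγ1 : γ < 1) (π : S → PMF A)
    {g : S × A → ℝ} (hg : ∀ sa, g sa ≤ γ * ∑ s', (P sa.1 sa.2 s').toReal * Vof π g s') :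
    g ≤ 0 := by
  intro sa
  have : Nonempty (S × A) := ⟨sa⟩
  obtain ⟨sa₀, hmax⟩ := Finite.exists_max g
  have hVof : ∀ s', Vof π g s' ≤ g sa₀ := fun s' => (π s').sum_toReal_mul_le fun a => hmax _
  have hdiscount : g sa₀ ≤ γ * g sa₀ :=
    (hg sa₀).trans (mul_le_mul_of_nonneg_left ((P _ _).sum_toReal_mul_le hVof) hγ0)
  have hmax_nonpos : g sa₀ ≤ 0 := by nlinarith
  exact (hmax sa).trans hmax_nonpos

lemma le_of_le_Tpol_of_Tpol_eq (hγ0 : 0 ≤ γ) (hγ1 : γ < 1) (π : S → PMF A)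
    {Q Q' : S × A → ℝ} (hQ : Q ≤ Tpol P l γ π Q) (hQ' : Tpol P l γ π Q' = Q') : Q ≤ Q' := by
  refine sub_nonpos.1 (le_zero_of_le_mul_sum_Vof P hγ0 hγ1 π fun sa => ?_)
  calc (Q - Q') sa ≤ Tpol P l γ π Q sa - Tpol P l γ π Q' sa := by
        rw [Pi.sub_apply, hQ']; exact sub_le_sub_right (hQ sa) _
    _ = _ := Tpol_sub_Tpol P l π Q Q' sa

lemma Tpol_fixedPoint_unique (hγ0 : 0 ≤ γ) (hγ1 : γ < 1) (π : S → PMF A)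
    {Q Q' : S × A → ℝ} (hQ : Tpol P l γ π Q = Q) (hQ' : Tpol P l γ π Q' = Q') : Q = Q' :=
  le_antisymm (le_of_le_Tpol_of_Tpol_eq P l hγ0 hγ1 π hQ.ge hQ')
    (le_of_le_Tpol_of_Tpol_eq P l hγ0 hγ1 π hQ'.ge hQ)

variable [Nonempty A]

lemma Topt_le_Tpol (hγ0 : 0 ≤ γ) (π : S → PMF A) (Q : S × A → ℝ) :
    Topt P l γ Q ≤ Tpol P l γ π Q := fun sa => by
  rw [Topt, Tpol_eq_add_sum_Vof]
  gcongr with s'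
  exact inf'_le_Vof π Q s'

lemma Tpol_greedyPolicy (Q : S × A → ℝ) : Tpol P l γ (greedyPolicy Q) Q = Topt P l γ Q := by
  funext sa
  simp only [Tpol_eq_add_sum_Vof, Vof_greedyPolicy, Topt]

end Bellman

theorem optimal_value_eq_iInf_policy_values_general
    {S A : Type*} [Fintype S] [Fintype A] [Nonempty A]
    (P : S → A → PMF S) (l : S → A → ℝ) (γ : ℝ) (hγ0 : 0 ≤ γ) (hγ1 : γ < 1)
    (Qstar : S × A → ℝ) (hQstar : Topt P l γ Qstar = Qstar)
    (Qpi : (S → PMF A) → S × A → ℝ)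
    (hQpi : ∀ π : S → PMF A, Tpol P l γ π (Qpi π) = Qpi π) :
    (∀ s : S, (univ.inf' univ_nonempty fun a => Qstar (s, a)) =
        ⨅ π : S → PMF A, Vof π (Qpi π) s) ∧
    ∃ π₀ : S → PMF A, ∀ s : S,
      Vof π₀ (Qpi π₀) s = ⨅ π : S → PMF A, Vof π (Qpi π) s := by
  have hQstar_le : ∀ π, Qstar ≤ Qpi π := fun π =>
    le_of_le_Tpol_of_Tpol_eq P l hγ0 hγ1 π (hQstar.ge.trans (Topt_le_Tpol P l hγ0 π Qstar))
      (hQpi π)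
  set π₀ := greedyPolicy Qstar
  have hQπ₀ : Qpi π₀ = Qstar :=
    Tpol_fixedPoint_unique P l hγ0 hγ1 π₀ (hQpi π₀) ((Tpol_greedyPolicy P l Qstar).trans hQstar)
  have hVπ₀ : ∀ s, Vof π₀ (Qpi π₀) s = univ.inf' univ_nonempty fun a => Qstar (s, a) := by
    intro s
    rw [hQπ₀, Vof_greedyPolicy]
  have hleast : ∀ s, IsLeast (Set.range fun π => Vof π (Qpi π) s)
      (univ.inf' univ_nonempty fun a => Qstar (s, a)) := fun s =>
    ⟨⟨π₀, hVπ₀ s⟩, Set.forall_mem_range.2 fun π =>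
      (inf'_le_Vof π Qstar s).trans (Vof_mono π (hQstar_le π) s)⟩
  exact ⟨fun s => (hleast s).csInf_eq.symm, π₀, fun s => (hVπ₀ s).trans (hleast s).csInf_eq.symm⟩

/-- The optimal value function equals the pointwise infimum over policies of the
policy value functions, and the infimum is attained by a single policy
simultaneously for all states. Here `Qpi π` denotes the unique fixed point of
`T^π` (given by the hypothesis `hQpi`) and `Qstar` the unique fixed point of `T`. -/
theorem optimal_value_eq_iInf_policy_values
    {S A : Type*} [Fintype S] [Fintype A] [Nonempty S] [Nonempty A]
    (P : S → A → PMF S) (l : S → A → ℝ) (γ : ℝ) (hγ0 : 0 ≤ γ) (hγ1 : γ < 1)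
    (Qstar : S × A → ℝ) (hQstar : Topt P l γ Qstar = Qstar)
    (Qpi : (S → PMF A) → S × A → ℝ)
    (hQpi : ∀ π : S → PMF A, Tpol P l γ π (Qpi π) = Qpi π) :
    (∀ s : S, (univ.inf' univ_nonempty fun a => Qstar (s, a)) =
        ⨅ π : S → PMF A, Vof π (Qpi π) s) ∧
    ∃ π₀ : S → PMF A, ∀ s : S,
      Vof π₀ (Qpi π₀) s = ⨅ π : S → PMF A, Vof π (Qpi π) s :=
  optimal_value_eq_iInf_policy_values_general P l γ hγ0 hγ1 Qstar hQstar Qpi hQpi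
end

section
/- Any stochastic policy supported on optimal actions is optimal: if a stochastic policy π : S → PMF A satisfies, for every s ∈ S, that every action a in the support of π s (i.e., with π s a > 0) satisfies Q⋆(s,a) = min_{a'} Q⋆(s,a'), then the unique fixed point Q^π of T^π equals Q⋆. -/
open Finset ENNReal

lemma pmf_sum_toReal {α : Type*} [Fintype α] (p : PMF α) :
    ∑ x, (p x).toReal = 1 := by
  have h := p.tsum_coe
  rw [tsum_fintype] at h
  have h2 : (∑ x, p x).toReal = (1 : ℝ≥0∞).toReal := by rw [h]
  rw [ENNReal.toReal_sum (fun a _ => PMF.apply_ne_top p a)] at h2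
  simpa using h2

lemma pmf_toReal_nonneg {α : Type*} (p : PMF α) (a : α) : 0 ≤ (p a).toReal :=
  ENNReal.toReal_nonneg

/-- Any stochastic policy supported on optimal actions is optimal: if every action
in the support of `π s` (i.e. with `π s a > 0`) minimizes `Q⋆(s,·)`, then the
unique fixed point `Q^π` of `T^π` equals `Q⋆`. -/
theorem policy_supported_on_optimal_actions_is_optimal
    {S A : Type*} [Fintype S] [Fintype A] [Nonempty S] [Nonempty A]
    (P : S → A → PMF S) (l : S → A → ℝ) (γ : ℝ) (hγ0 : 0 ≤ γ) (hγ1 : γ < 1)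
    (Qstar : S × A → ℝ) (hQstar : Topt P l γ Qstar = Qstar)
    (π : S → PMF A)
    (hsupp : ∀ s : S, ∀ a : A, 0 < π s a →
      Qstar (s, a) = univ.inf' univ_nonempty fun a' => Qstar (s, a'))
    (Qpi : S × A → ℝ) (hQpi : Tpol P l γ π Qpi = Qpi) :
    Qpi = Qstar := by
  -- Step 1: Qstar is also a fixed point of Tpol.
  have key : ∀ s' : S, ∑ a' : A, (π s' a').toReal * Qstar (s', a')
      = univ.inf' univ_nonempty fun a' => Qstar (s', a') := by
    intro s'
    have : ∑ a' : A, (π s' a').toReal * Qstar (s', a')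
        = ∑ a' : A, (π s' a').toReal *
            (univ.inf' univ_nonempty fun a'' => Qstar (s', a'')) := by
      refine Finset.sum_congr rfl fun a _ => ?_
      by_cases h : π s' a = 0
      · simp [h]
      · rw [hsupp s' a (pos_iff_ne_zero.mpr h)]
    rw [this, ← Finset.sum_mul, pmf_sum_toReal, one_mul]
  have hfix2 : Tpol P l γ π Qstar = Qstar := by
    funext sa
    conv_rhs => rw [← hQstar]
    simp only [Tpol, Topt]
    congr 2
    exact Finset.sum_congr rfl fun s' _ => by rw [key s']
  -- Step 2: uniqueness of the fixed point via contraction estimate.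
  have hne : (univ : Finset (S × A)).Nonempty := univ_nonempty
  set M : ℝ := univ.sup' hne (fun sa => |Qpi sa - Qstar sa|) with hM
  have hMle : ∀ sa : S × A, |Qpi sa - Qstar sa| ≤ M := fun sa => by
    rw [hM]; exact Finset.le_sup' (fun sa => |Qpi sa - Qstar sa|) (mem_univ sa)
  have hM0 : 0 ≤ M := le_trans (abs_nonneg _) (hMle (Classical.arbitrary _))
  have hbound : ∀ sa : S × A, |Qpi sa - Qstar sa| ≤ γ * M := by
    intro sa
    have h1 : Qpi sa - Qstar sa =
        γ * ∑ s' : S, (P sa.1 sa.2 s').toReal *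
          ∑ a' : A, (π s' a').toReal * (Qpi (s', a') - Qstar (s', a')) := by
      conv_lhs => rw [← hQpi, ← hfix2]
      simp only [Tpol]
      rw [add_sub_add_left_eq_sub, ← mul_sub, ← Finset.sum_sub_distrib]
      congr 1
      refine Finset.sum_congr rfl fun s' _ => ?_
      rw [← mul_sub, ← Finset.sum_sub_distrib]
      congr 1
      exact Finset.sum_congr rfl fun a' _ => by ring
    rw [h1, abs_mul, abs_of_nonneg hγ0]
    refine mul_le_mul_of_nonneg_left ?_ hγ0
    calc |∑ s' : S, (P sa.1 sa.2 s').toReal *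
          ∑ a' : A, (π s' a').toReal * (Qpi (s', a') - Qstar (s', a'))|
        ≤ ∑ s' : S, |(P sa.1 sa.2 s').toReal *
          ∑ a' : A, (π s' a').toReal * (Qpi (s', a') - Qstar (s', a'))| :=
          Finset.abs_sum_le_sum_abs _ _
      _ ≤ ∑ s' : S, (P sa.1 sa.2 s').toReal * M := by
          refine Finset.sum_le_sum fun s' _ => ?_
          rw [abs_mul, abs_of_nonneg (pmf_toReal_nonneg _ _)]
          refine mul_le_mul_of_nonneg_left ?_ (pmf_toReal_nonneg _ _)
          calc |∑ a' : A, (π s' a').toReal * (Qpi (s', a') - Qstar (s', a'))|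
              ≤ ∑ a' : A, |(π s' a').toReal * (Qpi (s', a') - Qstar (s', a'))| :=
                Finset.abs_sum_le_sum_abs _ _
            _ ≤ ∑ a' : A, (π s' a').toReal * M := by
                refine Finset.sum_le_sum fun a' _ => ?_
                rw [abs_mul, abs_of_nonneg (pmf_toReal_nonneg _ _)]
                exact mul_le_mul_of_nonneg_left (hMle _) (pmf_toReal_nonneg _ _)
            _ = M := by rw [← Finset.sum_mul, pmf_sum_toReal, one_mul]
      _ = M := by rw [← Finset.sum_mul, pmf_sum_toReal, one_mul]
  -- Conclude M ≤ γ M hence M = 0.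
  obtain ⟨sa0, _, hsa0⟩ := Finset.exists_mem_eq_sup' hne
    (fun sa => |Qpi sa - Qstar sa|)
  have hMγ : M ≤ γ * M := by
    conv_lhs => rw [hM, hsa0]
    exact hbound sa0
  have hMzero : M ≤ 0 := by nlinarith
  funext sa
  have := hMle sa
  have : |Qpi sa - Qstar sa| ≤ 0 := le_trans this hMzero
  have := abs_nonpos_iff.mp this
  linarith [sub_eq_zero.mp this]
end

section
/- The fixed point of the policy Bellman operator equals the discounted sum of expected stage costs along the induced Markov chain: for every stochastic policy π and every (s,a) ∈ S × A, defining the state-action transition kernel K_π : S × A → PMF (S × A) by K_π(s,a) = (P s a).bind (fun s' => (π s').map (fun a' => (s', a'))) and the distributions μ_0 = PMF.pure (s,a), μ_{k+1} = μ_k.bind K_π, the series ∑_{k=0}^∞ γ^k · (∑_{(s',a')} μ_k (s',a') · l(s',a')) is summable and its sum equals Q^π(s,a). -/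
/-!
Unrolling the Bellman equation `Q = l + γ K_π Q` along the chain gives, for every `n`,
`Q(s,a) = ∑_{k<n} γ^k 𝔼_{μ_k} l + γ^n 𝔼_{μ_n} Q`. Expectations of a fixed function are bounded
by its sup norm uniformly in the distribution, so the series converges geometrically and the
remainder `γ^n 𝔼_{μ_n} Q` tends to zero.
-/

open Finset

/-- The state-action transition kernel of the Markov chain induced by policy `π`:
`K_π(s,a) = (P s a).bind (fun s' => (π s').map (fun a' => (s', a')))`. -/
noncomputable def Kpol {S A : Type*} (P : S → A → PMF S) (π : S → PMF A)
    (sa : S × A) : PMF (S × A) :=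
  (P sa.1 sa.2).bind fun s' => (π s').map fun a' => (s', a')

/-- The marginal distributions of the induced state-action Markov chain started at
`sa`: `μ_0 = PMF.pure sa`, `μ_{k+1} = μ_k.bind K_π`. -/
noncomputable def muSeq {S A : Type*} (P : S → A → PMF S) (π : S → PMF A)
    (sa : S × A) : ℕ → PMF (S × A)
  | 0 => PMF.pure sa
  | k + 1 => (muSeq P π sa k).bind (Kpol P π)

open Filter Topology

namespace PMF

variable {α β : Type*} [Fintype α] [Fintype β]

noncomputable def expect (μ : PMF α) (f : α → ℝ) : ℝ :=
  ∑ x, (μ x).toReal * f x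

lemma sum_toReal_eq_one_s13 (μ : PMF α) : ∑ x, (μ x).toReal = 1 := by
  rw [← ENNReal.toReal_sum fun x _ => μ.apply_ne_top x, ← tsum_fintype (L := .unconditional _),
    μ.tsum_coe, ENNReal.toReal_one]

lemma expect_pure (a : α) (f : α → ℝ) : (pure a).expect f = f a := by
  rw [expect, sum_eq_single a (fun x _ hx => by simp [pure_apply, hx]) (by simp)]
  simp

lemma expect_bind (p : PMF α) (q : α → PMF β) (f : β → ℝ) :
    (p.bind q).expect f = p.expect fun x => (q x).expect f := by
  simp only [expect, bind_apply, tsum_fintype, mul_sum]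
  rw [sum_comm]
  refine sum_congr rfl fun y _ => ?_
  rw [ENNReal.toReal_sum fun x _ => ENNReal.mul_ne_top (p.apply_ne_top x) ((q x).apply_ne_top y),
    sum_mul]
  refine sum_congr rfl fun x _ => ?_
  rw [ENNReal.toReal_mul, mul_assoc]

lemma expect_map (p : PMF α) (g : α → β) (f : β → ℝ) :
    (p.map g).expect f = p.expect (f ∘ g) := by
  simp only [map, expect_bind, Function.comp_apply, expect_pure]
  rfl

lemma expect_add_const_mul (μ : PMF α) (f g : α → ℝ) (c : ℝ) :
    μ.expect (fun x => f x + c * g x) = μ.expect f + c * μ.expect g := by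
  simp only [expect, mul_add, sum_add_distrib, mul_sum]
  congr 1
  exact sum_congr rfl fun x _ => by ring

lemma abs_expect_le_norm (μ : PMF α) (f : α → ℝ) : |μ.expect f| ≤ ‖f‖ :=
  calc |μ.expect f| ≤ ∑ x, |(μ x).toReal * f x| := abs_sum_le_sum_abs _ _
    _ ≤ ∑ x, (μ x).toReal * ‖f‖ := by
        refine sum_le_sum fun x _ => ?_
        rw [abs_mul, abs_of_nonneg ENNReal.toReal_nonneg, ← Real.norm_eq_abs]
        exact mul_le_mul_of_nonneg_left (norm_le_pi_norm f x) ENNReal.toReal_nonneg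
    _ = ‖f‖ := by rw [← sum_mul, sum_toReal_eq_one_s13, one_mul]

lemma norm_pow_mul_expect_le (γ : ℝ) (n : ℕ) (μ : PMF α) (f : α → ℝ) :
    ‖γ ^ n * μ.expect f‖ ≤ ‖f‖ * |γ| ^ n := by
  rw [norm_mul, norm_pow, Real.norm_eq_abs, Real.norm_eq_abs, mul_comm]
  exact mul_le_mul_of_nonneg_right (abs_expect_le_norm μ f) (by positivity)

section Bellman

variable {K : α → PMF α} {c Q : α → ℝ} {γ : ℝ} {μ : ℕ → PMF α}

lemma expect_eq_add_expect_bind (hQ : ∀ x, Q x = c x + γ * (K x).expect Q) (ν : PMF α) :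
    ν.expect Q = ν.expect c + γ * (ν.bind K).expect Q := by
  rw [expect_bind, ← expect_add_const_mul]
  exact sum_congr rfl fun x _ => congrArg _ (hQ x)

lemma expect_eq_sum_range_add_of_bellman (hQ : ∀ x, Q x = c x + γ * (K x).expect Q)
    (hμ : ∀ k, μ (k + 1) = (μ k).bind K) (n : ℕ) :
    (μ 0).expect Q = ∑ k ∈ range n, γ ^ k * (μ k).expect c + γ ^ n * (μ n).expect Q := by
  induction n with
  | zero => simp
  | succ n ih =>
    rw [ih, expect_eq_add_expect_bind hQ (μ n), ← hμ, sum_range_succ]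
    ring

theorem hasSum_pow_mul_expect_of_bellman (hγ : |γ| < 1)
    (hQ : ∀ x, Q x = c x + γ * (K x).expect Q) (hμ : ∀ k, μ (k + 1) = (μ k).bind K) :
    HasSum (fun k => γ ^ k * (μ k).expect c) ((μ 0).expect Q) := by
  have hsummable : Summable fun k => γ ^ k * (μ k).expect c :=
    .of_norm_bounded ((summable_geometric_of_lt_one (abs_nonneg γ) hγ).mul_left ‖c‖)
      fun k => norm_pow_mul_expect_le γ k (μ k) c
  have hremainder : Tendsto (fun n => γ ^ n * (μ n).expect Q) atTop (𝓝 0) := by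
    refine squeeze_zero_norm (fun n => norm_pow_mul_expect_le γ n (μ n) Q) ?_
    simpa using (tendsto_pow_atTop_nhds_zero_of_lt_one (abs_nonneg γ) hγ).const_mul ‖Q‖
  rw [hsummable.hasSum_iff_tendsto_nat]
  have hpartial : (fun n => ∑ k ∈ range n, γ ^ k * (μ k).expect c)
      = fun n => (μ 0).expect Q - γ ^ n * (μ n).expect Q := by
    funext n
    rw [expect_eq_sum_range_add_of_bellman hQ hμ n]
    ring
  simpa [hpartial] using tendsto_const_nhds.sub hremainder

end Bellman

end PMF

lemma Tpol_apply_eq_add_expect_Kpol {S A : Type*} [Fintype S] [Fintype A]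
    (P : S → A → PMF S) (l : S → A → ℝ) (γ : ℝ) (π : S → PMF A) (Q : S × A → ℝ)
    (sa : S × A) :
    Tpol P l γ π Q sa = l sa.1 sa.2 + γ * (Kpol P π sa).expect Q := by
  simp only [Tpol, Kpol, PMF.expect_bind, PMF.expect_map]
  rfl

theorem fixed_point_eq_discounted_expected_costs_general
    {S A : Type*} [Fintype S] [Fintype A]
    (P : S → A → PMF S) (l : S → A → ℝ) (γ : ℝ) (hγ0 : 0 ≤ γ) (hγ1 : γ < 1)
    (π : S → PMF A) (Qpi : S × A → ℝ) (hQpi : Tpol P l γ π Qpi = Qpi)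
    (s : S) (a : A) :
    HasSum
      (fun k : ℕ => γ ^ k *
        ∑ sa' : S × A, (muSeq P π (s, a) k sa').toReal * l sa'.1 sa'.2)
      (Qpi (s, a)) := by
  have hbellman (sa : S × A) : Qpi sa = l sa.1 sa.2 + γ * (Kpol P π sa).expect Qpi := by
    rw [← Tpol_apply_eq_add_expect_Kpol, hQpi]
  have hsum := PMF.hasSum_pow_mul_expect_of_bellman (abs_lt.2 ⟨by linarith, hγ1⟩) hbellman
    (μ := muSeq P π (s, a)) fun k => rfl
  rwa [muSeq, PMF.expect_pure] at hsum

/-- The fixed point of the policy Bellman operator equals the discounted sum of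
expected stage costs along the induced Markov chain: the series
`∑_k γ^k ∑_{(s',a')} μ_k(s',a') l(s',a')` is summable with sum `Q^π(s,a)`. -/
theorem fixed_point_eq_discounted_expected_costs
    {S A : Type*} [Fintype S] [Fintype A] [Nonempty S] [Nonempty A]
    (P : S → A → PMF S) (l : S → A → ℝ) (γ : ℝ) (hγ0 : 0 ≤ γ) (hγ1 : γ < 1)
    (π : S → PMF A) (Qpi : S × A → ℝ) (hQpi : Tpol P l γ π Qpi = Qpi)
    (s : S) (a : A) :
    HasSum
      (fun k : ℕ => γ ^ k *
        ∑ sa' : S × A, (muSeq P π (s, a) k sa').toReal * l sa'.1 sa'.2)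
      (Qpi (s, a)) :=
  fixed_point_eq_discounted_expected_costs_general P l γ hγ0 hγ1 π Qpi hQpi s a
end
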